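/- Let n ≥ 1, p₁ ≠ 0, p₂ ∈ ℝ, and let A0, Π0, λ : ℝ × ℝⁿ → ℝ and A, Π : ℝ × ℝⁿ → ℝⁿ be smooth fields satisfying the canonical Stueckelberg–Proca equations: ∂₀A0 = λΠ0 − Σᵢ∂ᵢAᵢ; ∂₀Π0 = −p₂A0 − Σᵢ∂ᵢΠᵢ; ∂₀Aᵢ = p₁Πᵢ − ∂ᵢA0; ∂₀Πᵢ = p₂Aᵢ − ∂ᵢΠ0 + (1/p₁)(ΔAᵢ − ∂ᵢΣⱼ∂ⱼAⱼ) for each i. Define the constraint fields C₁ = Π0 and C₂ = −p₂A0 − Σᵢ∂ᵢΠᵢ. Then ∂₀C₁ = C₂ and ∂₀C₂ = −p₂·λ·C₁ + ΔC₁ everywhere on ℝ × ℝⁿ. -/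

import Mathlib

open scoped BigOperators

/-- Partial derivative in the time direction `x⁰` on `ℝ × ℝⁿ`. -/
noncomputable def pd0 {n : ℕ} (f : ℝ × (Fin n → ℝ) → ℝ) (p : ℝ × (Fin n → ℝ)) : ℝ :=
  deriv (fun s => f (s, p.2)) p.1

/-- Partial derivative in the spatial direction `xⁱ` on `ℝ × ℝⁿ`. -/
noncomputable def pdS {n : ℕ} (i : Fin n) (f : ℝ × (Fin n → ℝ) → ℝ)
    (p : ℝ × (Fin n → ℝ)) : ℝ :=
  deriv (fun s => f (p.1, Function.update p.2 i s)) (p.2 i)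

def eT {n : ℕ} : ℝ × (Fin n → ℝ) := (1, 0)
def eX {n : ℕ} (i : Fin n) : ℝ × (Fin n → ℝ) := (0, Pi.single i 1)

lemma pd0_eq {n : ℕ} {f : ℝ × (Fin n → ℝ) → ℝ} {p : ℝ × (Fin n → ℝ)}
    (hf : DifferentiableAt ℝ f p) : pd0 f p = fderiv ℝ f p eT := by
  obtain ⟨t, x⟩ := p
  have hc : HasDerivAt (fun s : ℝ => ((s, x) : ℝ × (Fin n → ℝ))) (1, 0) t :=
    (hasDerivAt_id t).prodMk (hasDerivAt_const t x)
  exact (hf.hasFDerivAt.comp_hasDerivAt t hc).deriv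

lemma pdS_eq {n : ℕ} (i : Fin n) {f : ℝ × (Fin n → ℝ) → ℝ} {p : ℝ × (Fin n → ℝ)}
    (hf : DifferentiableAt ℝ f p) : pdS i f p = fderiv ℝ f p (eX i) := by
  obtain ⟨t, x⟩ := p
  have hc : HasDerivAt (fun s : ℝ => ((t, Function.update x i s) : ℝ × (Fin n → ℝ)))
      (0, Pi.single i 1) (x i) :=
    (hasDerivAt_const (x i) t).prodMk (hasDerivAt_update x i (x i))
  have hf' : HasFDerivAt f (fderiv ℝ f (t, x)) (t, Function.update x i (x i)) := by
    rw [Function.update_eq_self]; exact hf.hasFDerivAt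
  exact (hf'.comp_hasDerivAt (x i) hc).deriv

lemma Dsmooth {n : ℕ} {f : ℝ × (Fin n → ℝ) → ℝ} (hf : ContDiff ℝ (⊤ : ℕ∞) f)
    (v : ℝ × (Fin n → ℝ)) : ContDiff ℝ (⊤ : ℕ∞) (fun p => fderiv ℝ f p v) :=
  (hf.fderiv_right (by simp)).clm_apply contDiff_const

lemma Dcomm {n : ℕ} {f : ℝ × (Fin n → ℝ) → ℝ} (hf : ContDiff ℝ (⊤ : ℕ∞) f)
    (v w p : ℝ × (Fin n → ℝ)) :
    fderiv ℝ (fun q => fderiv ℝ f q w) p v = fderiv ℝ (fun q => fderiv ℝ f q v) p w := by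
  have hd : Differentiable ℝ (fderiv ℝ f) := (hf.fderiv_right (m := (⊤ : ℕ∞)) (by simp)).differentiable (by simp)
  have key : ∀ (u v : ℝ × (Fin n → ℝ)),
      fderiv ℝ (fun q => fderiv ℝ f q u) p v = fderiv ℝ (fderiv ℝ f) p v u := by
    intro u v
    rw [fderiv_clm_apply (hd p) (differentiableAt_const u)]
    simp
  rw [key, key]
  exact (hf.contDiffAt.isSymmSndFDerivAt (by rw [minSmoothness_of_isRCLikeNormedField]; exact WithTop.coe_le_coe.mpr le_top)).eq v w

lemma D_sub {n : ℕ} {f g : ℝ × (Fin n → ℝ) → ℝ} {p : ℝ × (Fin n → ℝ)}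
    (hf : DifferentiableAt ℝ f p) (hg : DifferentiableAt ℝ g p) (v : ℝ × (Fin n → ℝ)) :
    fderiv ℝ (fun q => f q - g q) p v = fderiv ℝ f p v - fderiv ℝ g p v := by
  rw [fderiv_fun_sub hf hg]; rfl

lemma D_add {n : ℕ} {f g : ℝ × (Fin n → ℝ) → ℝ} {p : ℝ × (Fin n → ℝ)}
    (hf : DifferentiableAt ℝ f p) (hg : DifferentiableAt ℝ g p) (v : ℝ × (Fin n → ℝ)) :
    fderiv ℝ (fun q => f q + g q) p v = fderiv ℝ f p v + fderiv ℝ g p v := by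
  rw [fderiv_fun_add hf hg]; rfl

lemma D_const_mul {n : ℕ} {f : ℝ × (Fin n → ℝ) → ℝ} {p : ℝ × (Fin n → ℝ)}
    (hf : DifferentiableAt ℝ f p) (b : ℝ) (v : ℝ × (Fin n → ℝ)) :
    fderiv ℝ (fun q => b * f q) p v = b * fderiv ℝ f p v := by
  rw [fderiv_const_mul hf b]; simp

lemma D_sum {n : ℕ} {ι : Type*} {s : Finset ι} {f : ι → ℝ × (Fin n → ℝ) → ℝ}
    {p : ℝ × (Fin n → ℝ)} (hf : ∀ i ∈ s, DifferentiableAt ℝ (f i) p) (v : ℝ × (Fin n → ℝ)) :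
    fderiv ℝ (fun q => ∑ i ∈ s, f i q) p v = ∑ i ∈ s, fderiv ℝ (f i) p v := by
  rw [fderiv_fun_sum hf]; simp

lemma T3_comm {n : ℕ} {f : ℝ × (Fin n → ℝ) → ℝ} (hf : ContDiff ℝ (⊤ : ℕ∞) f)
    (u w p : ℝ × (Fin n → ℝ)) :
    fderiv ℝ (fun q => fderiv ℝ (fun r => fderiv ℝ f r u) q u) p w
    = fderiv ℝ (fun q => fderiv ℝ (fun r => fderiv ℝ f r w) q u) p u := by
  have h1 := Dcomm (Dsmooth hf u) w u p
  have h2 : (fun q => fderiv ℝ (fun r => fderiv ℝ f r u) q w)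
      = (fun q => fderiv ℝ (fun r => fderiv ℝ f r w) q u) :=
    funext fun q => Dcomm hf w u q
  rw [h1, h2]

lemma final_algebra {n : ℕ} (lp Pp p₂ c : ℝ) (a B S1 S2 : Fin n → ℝ)
    (hS : ∑ i, S1 i = ∑ i, S2 i) :
    -p₂ * (lp * Pp - ∑ i, a i) - ∑ i, (p₂ * a i - B i + c * (S1 i - S2 i))
      = -p₂ * lp * Pp + ∑ i, B i := by
  have h1 : ∑ i, (p₂ * a i - B i + c * (S1 i - S2 i))
      = (p₂ * ∑ i, a i) - (∑ i, B i) + c * ((∑ i, S1 i) - ∑ i, S2 i) := by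
    rw [Finset.sum_add_distrib, Finset.sum_sub_distrib, ← Finset.mul_sum, ← Finset.mul_sum,
      ← Finset.sum_sub_distrib]
  rw [h1, hS]; ring

/-- For smooth fields satisfying the canonical Stueckelberg–Proca equations, the
constraints `C₁ = Π₀` and `C₂ = −p₂A⁰ − Σᵢ∂ᵢΠᵢ` satisfy the propagation system
`∂₀C₁ = C₂` and `∂₀C₂ = −p₂λC₁ + ΔC₁`. -/
theorem proca_constraint_propagation {n : ℕ} (hn : 1 ≤ n) (p₁ p₂ : ℝ) (hp₁ : p₁ ≠ 0)
    (A0 Pi0 lam : ℝ × (Fin n → ℝ) → ℝ) (A Pi : Fin n → ℝ × (Fin n → ℝ) → ℝ)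
    (hA0 : ContDiff ℝ (⊤ : ℕ∞) A0) (hPi0 : ContDiff ℝ (⊤ : ℕ∞) Pi0) (hlam : ContDiff ℝ (⊤ : ℕ∞) lam)
    (hA : ∀ i, ContDiff ℝ (⊤ : ℕ∞) (A i)) (hPi : ∀ i, ContDiff ℝ (⊤ : ℕ∞) (Pi i))
    (e1 : ∀ p, pd0 A0 p = lam p * Pi0 p - ∑ i : Fin n, pdS i (A i) p)
    (e2 : ∀ p, pd0 Pi0 p = -p₂ * A0 p - ∑ i : Fin n, pdS i (Pi i) p)
    (e3 : ∀ (i : Fin n) (p), pd0 (A i) p = p₁ * Pi i p - pdS i A0 p)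
    (e4 : ∀ (i : Fin n) (p), pd0 (Pi i) p = p₂ * A i p - pdS i Pi0 p
        + (1 / p₁) * ((∑ j : Fin n, pdS j (pdS j (A i)) p)
            - pdS i (fun q => ∑ j : Fin n, pdS j (A j) q) p))
    (C₁ C₂ : ℝ × (Fin n → ℝ) → ℝ)
    (hC₁ : C₁ = Pi0)
    (hC₂ : C₂ = fun q => -p₂ * A0 q - ∑ i : Fin n, pdS i (Pi i) q) :
    (∀ p, pd0 C₁ p = C₂ p) ∧
    (∀ p, pd0 C₂ p = -p₂ * lam p * C₁ p + ∑ i : Fin n, pdS i (pdS i C₁) p) := by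
  subst hC₂
  rw [hC₁]
  have dA : ∀ i, Differentiable ℝ (A i) := fun i => (hA i).differentiable (by simp)
  have dPi : ∀ i, Differentiable ℝ (Pi i) := fun i => (hPi i).differentiable (by simp)
  have dA0 : Differentiable ℝ A0 := hA0.differentiable (by simp)
  have dPi0 : Differentiable ℝ Pi0 := hPi0.differentiable (by simp)
  have hInner : ∀ (f : ℝ × (Fin n → ℝ) → ℝ), ContDiff ℝ (⊤ : ℕ∞) f → ∀ j : Fin n,
      pdS j f = fun q => fderiv ℝ f q (eX j) :=
    fun f hf j => funext fun q => pdS_eq j (hf.differentiable (by simp) q)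
  constructor
  · exact fun p => e2 p
  intro p
  -- rewrite the C₂ function into fderiv form
  have hC2eq : (fun q => -p₂ * A0 q - ∑ i : Fin n, pdS i (Pi i) q)
      = fun q => -p₂ * A0 q - ∑ i : Fin n, fderiv ℝ (Pi i) q (eX i) := by
    funext q
    have : (∑ i : Fin n, pdS i (Pi i) q) = ∑ i : Fin n, fderiv ℝ (Pi i) q (eX i) :=
      Finset.sum_congr rfl fun i _ => pdS_eq i (dPi i q)
    rw [this]
  rw [hC2eq]
  -- right-hand side
  have hRHS : (∑ i : Fin n, pdS i (pdS i Pi0) p)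
      = ∑ i : Fin n, fderiv ℝ (fun q => fderiv ℝ Pi0 q (eX i)) p (eX i) := by
    refine Finset.sum_congr rfl fun i _ => ?_
    rw [hInner Pi0 hPi0 i]
    exact pdS_eq i ((Dsmooth hPi0 (eX i)).differentiable (by simp) p)
  rw [hRHS]
  -- smoothness pieces
  have sP : ∀ i : Fin n, ContDiff ℝ (⊤ : ℕ∞) (fun q => fderiv ℝ (Pi i) q (eX i)) :=
    fun i => Dsmooth (hPi i) _
  have hC2s : ContDiff ℝ (⊤ : ℕ∞) (fun q => -p₂ * A0 q - ∑ i : Fin n, fderiv ℝ (Pi i) q (eX i)) :=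
    (contDiff_const.mul hA0).sub (ContDiff.sum fun i _ => sP i)
  rw [pd0_eq (hC2s.differentiable (by simp) p)]
  rw [D_sub ((contDiff_const.mul hA0).differentiable (by simp) p)
      ((ContDiff.sum fun i (_ : i ∈ Finset.univ) => sP i).differentiable (by simp) p) eT,
    D_const_mul (dA0 p) (-p₂) eT,
    D_sum (fun i _ => ((sP i).differentiable (by simp) p)) eT]
  -- time derivative of A0 via e1
  have hA0t : fderiv ℝ A0 p eT = lam p * Pi0 p - ∑ i : Fin n, fderiv ℝ (A i) p (eX i) := by
    rw [← pd0_eq (dA0 p), e1 p]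
    have : (∑ i : Fin n, pdS i (A i) p) = ∑ i : Fin n, fderiv ℝ (A i) p (eX i) :=
      Finset.sum_congr rfl fun i _ => pdS_eq i (dA i p)
    rw [this]
  rw [hA0t]
  -- divergence pieces
  have sdiv : ContDiff ℝ (⊤ : ℕ∞) (fun r => ∑ j : Fin n, fderiv ℝ (A j) r (eX j)) :=
    ContDiff.sum fun j _ => Dsmooth (hA j) _
  have hdivA : (fun q => ∑ j : Fin n, pdS j (A j) q)
      = fun r => ∑ j : Fin n, fderiv ℝ (A j) r (eX j) := by
    funext q; exact Finset.sum_congr rfl fun j _ => pdS_eq j (dA j q)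
  -- per-i computation
  have hterm : ∀ i : Fin n,
      fderiv ℝ (fun q => fderiv ℝ (Pi i) q (eX i)) p eT
      = p₂ * fderiv ℝ (A i) p (eX i)
        - fderiv ℝ (fun q => fderiv ℝ Pi0 q (eX i)) p (eX i)
        + (1 / p₁) * ((∑ j : Fin n,
              fderiv ℝ (fun q => fderiv ℝ (fun r => fderiv ℝ (A i) r (eX j)) q (eX j)) p (eX i))
            - ∑ j : Fin n,
              fderiv ℝ (fun q => fderiv ℝ (fun r => fderiv ℝ (A j) r (eX j)) q (eX i)) p (eX i)) := by
    intro i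
    rw [Dcomm (hPi i) eT (eX i) p]
    have hfun : (fun q => fderiv ℝ (Pi i) q eT)
        = fun q => p₂ * A i q - fderiv ℝ Pi0 q (eX i)
            + (1 / p₁) * ((∑ j : Fin n, fderiv ℝ (fun r => fderiv ℝ (A i) r (eX j)) q (eX j))
                - fderiv ℝ (fun r => ∑ j : Fin n, fderiv ℝ (A j) r (eX j)) q (eX i)) := by
      funext q
      rw [← pd0_eq (dPi i q), e4 i q]
      have t1 : pdS i Pi0 q = fderiv ℝ Pi0 q (eX i) := pdS_eq i (dPi0 q)
      have t2 : (∑ j : Fin n, pdS j (pdS j (A i)) q)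
          = ∑ j : Fin n, fderiv ℝ (fun r => fderiv ℝ (A i) r (eX j)) q (eX j) := by
        refine Finset.sum_congr rfl fun j _ => ?_
        rw [hInner (A i) (hA i) j]
        exact pdS_eq j ((Dsmooth (hA i) (eX j)).differentiable (by simp) q)
      have t3 : pdS i (fun q' => ∑ j : Fin n, pdS j (A j) q') q
          = fderiv ℝ (fun r => ∑ j : Fin n, fderiv ℝ (A j) r (eX j)) q (eX i) := by
        rw [hdivA]
        exact pdS_eq i (sdiv.differentiable (by simp) q)
      rw [t1, t2, t3]
    rw [hfun]
    have d1 : DifferentiableAt ℝ (fun q => p₂ * A i q) p :=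
      (contDiff_const.mul (hA i)).differentiable (by simp) p
    have d2 : DifferentiableAt ℝ (fun q => fderiv ℝ Pi0 q (eX i)) p :=
      (Dsmooth hPi0 (eX i)).differentiable (by simp) p
    have sInner : ∀ j : Fin n,
        ContDiff ℝ (⊤ : ℕ∞) (fun q => fderiv ℝ (fun r => fderiv ℝ (A i) r (eX j)) q (eX j)) :=
      fun j => Dsmooth (Dsmooth (hA i) (eX j)) (eX j)
    have sBig : ContDiff ℝ (⊤ : ℕ∞)
        (fun q => (∑ j : Fin n, fderiv ℝ (fun r => fderiv ℝ (A i) r (eX j)) q (eX j))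
          - fderiv ℝ (fun r => ∑ j : Fin n, fderiv ℝ (A j) r (eX j)) q (eX i)) :=
      (ContDiff.sum fun j _ => sInner j).sub (Dsmooth sdiv (eX i))
    rw [D_add (d1.fun_sub d2) ((contDiff_const.mul sBig).differentiable (by simp) p) (eX i),
      D_sub d1 d2 (eX i), D_const_mul (dA i p) p₂ (eX i),
      D_const_mul (sBig.differentiable (by simp) p) (1 / p₁) (eX i),
      D_sub ((ContDiff.sum fun j (_ : j ∈ Finset.univ) => sInner j).differentiable (by simp) p)
        ((Dsmooth sdiv (eX i)).differentiable (by simp) p) (eX i),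
      D_sum (fun j _ => (sInner j).differentiable (by simp) p) (eX i)]
    have hU : (fun q => fderiv ℝ (fun r => ∑ j : Fin n, fderiv ℝ (A j) r (eX j)) q (eX i))
        = fun q => ∑ j : Fin n, fderiv ℝ (fun r => fderiv ℝ (A j) r (eX j)) q (eX i) :=
      funext fun q => D_sum (fun j _ => (Dsmooth (hA j) (eX j)).differentiable (by simp) q) (eX i)
    rw [hU, D_sum (fun j _ => (Dsmooth (Dsmooth (hA j) (eX j)) (eX i)).differentiable (by simp) p) (eX i)]
  have hsum1 : (∑ i : Fin n, fderiv ℝ (fun q => fderiv ℝ (Pi i) q (eX i)) p eT)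
      = ∑ i : Fin n, (p₂ * fderiv ℝ (A i) p (eX i)
        - fderiv ℝ (fun q => fderiv ℝ Pi0 q (eX i)) p (eX i)
        + (1 / p₁) * ((∑ j : Fin n,
              fderiv ℝ (fun q => fderiv ℝ (fun r => fderiv ℝ (A i) r (eX j)) q (eX j)) p (eX i))
            - ∑ j : Fin n,
              fderiv ℝ (fun q => fderiv ℝ (fun r => fderiv ℝ (A j) r (eX j)) q (eX i)) p (eX i))) :=
    Finset.sum_congr rfl fun i _ => hterm i
  rw [hsum1]
  -- the third-derivative cancellation
  have hS : (∑ i : Fin n, ∑ j : Fin n,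
        fderiv ℝ (fun q => fderiv ℝ (fun r => fderiv ℝ (A i) r (eX j)) q (eX j)) p (eX i))
      = ∑ i : Fin n, ∑ j : Fin n,
        fderiv ℝ (fun q => fderiv ℝ (fun r => fderiv ℝ (A j) r (eX j)) q (eX i)) p (eX i) := by
    have h1 : (∑ i : Fin n, ∑ j : Fin n,
          fderiv ℝ (fun q => fderiv ℝ (fun r => fderiv ℝ (A i) r (eX j)) q (eX j)) p (eX i))
        = ∑ i : Fin n, ∑ j : Fin n,
          fderiv ℝ (fun q => fderiv ℝ (fun r => fderiv ℝ (A i) r (eX i)) q (eX j)) p (eX j) :=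
      Finset.sum_congr rfl fun i _ => Finset.sum_congr rfl fun j _ =>
        T3_comm (hA i) (eX j) (eX i) p
    rw [h1]
    exact Finset.sum_comm (s := Finset.univ) (t := Finset.univ)
      (f := fun i j => fderiv ℝ (fun q => fderiv ℝ (fun r => fderiv ℝ (A i) r (eX i)) q (eX j)) p (eX j))
  exact final_algebra (lam p) (Pi0 p) p₂ (1 / p₁)
    (fun i => fderiv ℝ (A i) p (eX i))
    (fun i => fderiv ℝ (fun q => fderiv ℝ Pi0 q (eX i)) p (eX i))
    (fun i => ∑ j : Fin n,
        fderiv ℝ (fun q => fderiv ℝ (fun r => fderiv ℝ (A i) r (eX j)) q (eX j)) p (eX i))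
    (fun i => ∑ j : Fin n,
        fderiv ℝ (fun q => fderiv ℝ (fun r => fderiv ℝ (A j) r (eX j)) q (eX i)) p (eX i))
    hS
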